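/- Let b = [[-2,1,1,1],[1,-2,1,1],[1,1,-2,1],[1,1,1,-2]] (matrix b^(28)) and I the 2×2 identity, over ℂ(ξ_α,ξ_β,ξ_γ). With R_{βα} = −(I⊗I − ξ_α b)⁻¹(I⊗I − ξ_β b), the Yang–Baxter equation (R_{γβ}⊗I)(I⊗R_{γα})(R_{βα}⊗I) = (I⊗R_{βα})(R_{γα}⊗I)(I⊗R_{γβ}) holds. -/

import Mathlib

/-!
The matrix `b` is `J - 3`, with `J` the all-ones matrix, so `b = -3 (1 - P) + P` for the
projection `P = J / 4` onto the all-ones vector, and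
`R_{βα} = -(u_β / u_α) (1 - P) - (v_β / v_α) P` with `u = 1 + 3ξ`, `v = 1 - ξ`.
The projections `P ⊗ I` and `I ⊗ P` commute, so both sides of the Yang–Baxter equation split
along the four products of these projections and their complements. The equation then reduces
to multiplicativity of the eigenvalue ratio of `R_{βα}`, which is `φ_β / φ_α` with `φ = v / u`.
-/

open Matrix

noncomputable section

/-- The field of rational functions in the three spectral parameters `ξ_α, ξ_β, ξ_γ`. -/
abbrev KK : Type := FractionRing (MvPolynomial (Fin 3) ℚ)

/-- The spectral parameters `ξ 0 = ξ_α`, `ξ 1 = ξ_β`, `ξ 2 = ξ_γ` as elements of `KK`. -/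
def xi (i : Fin 3) : KK := algebraMap (MvPolynomial (Fin 3) ℚ) KK (MvPolynomial.X i)

/-- Reindexing of a 4×4 matrix by pairs, lexicographically: 0↦11, 1↦12, 2↦21, 3↦22. -/
def toPairs (M : Matrix (Fin 4) (Fin 4) KK) :
    Matrix (Fin 2 × Fin 2) (Fin 2 × Fin 2) KK :=
  Matrix.reindex finProdFinEquiv.symm finProdFinEquiv.symm M

/-- The matrix `b^(28)` of Alimohammadi–Ahmadi. -/
def bmat : Matrix (Fin 2 × Fin 2) (Fin 2 × Fin 2) KK :=
  toPairs !![-2,1,1,1; 1,-2,1,1; 1,1,-2,1; 1,1,1,-2]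

/-- The scattering matrix `R_{βα} = −(I⊗I − ξ_α b)⁻¹ (I⊗I − ξ_β b)`
(here `1` is the 4×4 identity `I⊗I`). -/
def R (β α : Fin 3) : Matrix (Fin 2 × Fin 2) (Fin 2 × Fin 2) KK :=
  -((1 - xi α • bmat)⁻¹ * (1 - xi β • bmat))

/-- `A ⊗ I` acting on the first two tensor factors of `(ℂ²)^{⊗3}`. -/
def legL (A : Matrix (Fin 2 × Fin 2) (Fin 2 × Fin 2) KK) :
    Matrix (Fin 2 × Fin 2 × Fin 2) (Fin 2 × Fin 2 × Fin 2) KK :=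
  Matrix.of fun p q => A (p.1, p.2.1) (q.1, q.2.1) * (if p.2.2 = q.2.2 then 1 else 0)

/-- `I ⊗ A` acting on the last two tensor factors of `(ℂ²)^{⊗3}`. -/
def legR (A : Matrix (Fin 2 × Fin 2) (Fin 2 × Fin 2) KK) :
    Matrix (Fin 2 × Fin 2 × Fin 2) (Fin 2 × Fin 2 × Fin 2) KK :=
  Matrix.of fun p q => (if p.1 = q.1 then 1 else 0) * A (p.2.1, p.2.2) (q.2.1, q.2.2)

section SpectralComb

variable {K A : Type*} [CommRing K] [Ring A] [Algebra K A]

/-- Acts as `a` on the kernel and as `b` on the range of an idempotent `P`. -/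
def spectralComb (P : A) (a b : K) : A := a • (1 - P) + b • P

theorem spectralComb_one_one (P : A) : spectralComb P (1 : K) 1 = 1 := by
  simp [spectralComb]

theorem spectralComb_eq_smul_one_add (P : A) (a b : K) :
    spectralComb P a b = a • 1 + (b - a) • P := by
  simp only [spectralComb, smul_sub, sub_smul]
  abel

theorem neg_spectralComb (P : A) (a b : K) :
    -spectralComb P a b = spectralComb P (-a) (-b) := by
  simp only [spectralComb, neg_smul, neg_add]

theorem one_sub_smul_spectralComb (P : A) (t a b : K) :
    1 - t • spectralComb P a b = spectralComb P (1 - t * a) (1 - t * b) := by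
  simp only [spectralComb, sub_smul, one_smul, smul_add, smul_smul]
  abel

theorem map_spectralComb {B : Type*} [Ring B] [Algebra K B] (f : A →ₐ[K] B) (P : A) (a b : K) :
    f (spectralComb P a b) = spectralComb (f P) a b := by
  simp [spectralComb]

theorem spectralComb_mul_spectralComb (P Q : A) (a b c d : K) :
    spectralComb P a b * spectralComb Q c d =
      (a * c) • ((1 - P) * (1 - Q)) + (a * d) • ((1 - P) * Q) +
        (b * c) • (P * (1 - Q)) + (b * d) • (P * Q) := by
  simp only [spectralComb, add_mul, mul_add, smul_mul_smul_comm]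
  abel

theorem IsIdempotentElem.spectralComb_mul {P : A} (hP : IsIdempotentElem P) (a b c d : K) :
    spectralComb P a b * spectralComb P c d = spectralComb P (a * c) (b * d) := by
  rw [spectralComb_mul_spectralComb, hP.one_sub.eq, hP.one_sub_mul_self, hP.mul_one_sub_self,
    hP.eq, spectralComb]
  simp

theorem Commute.spectralComb {P Q : A} (h : Commute P Q) (a b c d : K) :
    Commute (spectralComb P a b) (spectralComb Q c d) := by
  have hP₁ : Commute P (1 - Q) := (Commute.one_right P).sub_right h
  have hQ₁ : Commute (1 - P) Q := (Commute.one_left Q).sub_left h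
  have h₁₁ : Commute (1 - P) (1 - Q) := (Commute.one_left _).sub_left hP₁
  unfold _root_.spectralComb
  refine .add_left (.add_right ?_ ?_) (.add_right ?_ ?_) <;> refine .smul_left (.smul_right ?_ _) _
  exacts [h₁₁, hQ₁, hP₁, h]

theorem spectralComb_yangBaxter {P Q : A} (hP : IsIdempotentElem P) (hQ : IsIdempotentElem Q)
    (hPQ : Commute P Q) {a₁ b₁ a₂ b₂ a₃ b₃ : K}
    (h : a₃ * b₁ * b₂ = b₃ * a₁ * a₂) :
    spectralComb P a₁ b₁ * spectralComb Q a₃ b₃ * spectralComb P a₂ b₂ =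
      spectralComb Q a₂ b₂ * spectralComb P a₃ b₃ * spectralComb Q a₁ b₁ := by
  rw [mul_assoc, (hPQ.symm.spectralComb a₃ b₃ a₂ b₂).eq, ← mul_assoc, hP.spectralComb_mul,
    (hPQ.symm.spectralComb a₂ b₂ a₃ b₃).eq, mul_assoc, hQ.spectralComb_mul,
    spectralComb_mul_spectralComb, spectralComb_mul_spectralComb]
  match_scalars <;> [ring; linear_combination -h; linear_combination h; ring]

end SpectralComb

theorem Matrix.of_one_mul_of_one {l m n α : Type*} [Fintype m] [NonAssocSemiring α] :
    (of 1 : Matrix l m α) * (of 1 : Matrix m n α) = (Fintype.card m : α) • of 1 := by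
  ext; simp [mul_apply]

theorem Matrix.isIdempotentElem_inv_card_smul_of_one {n α : Type*} [Fintype n] [Field α]
    (hn : (Fintype.card n : α) ≠ 0) :
    IsIdempotentElem ((Fintype.card n : α)⁻¹ • (of 1 : Matrix n n α)) := by
  rw [IsIdempotentElem, smul_mul_smul_comm, of_one_mul_of_one, smul_smul, mul_assoc,
    inv_mul_cancel₀ hn, mul_one]

theorem Matrix.inv_spectralComb {n α : Type*} [Fintype n] [DecidableEq n] [Field α]
    {P : Matrix n n α} (hP : IsIdempotentElem P) {a b : α} (ha : a ≠ 0) (hb : b ≠ 0) :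
    (spectralComb P a b)⁻¹ = spectralComb P a⁻¹ b⁻¹ :=
  inv_eq_right_inv <| by
    rw [hP.spectralComb_mul, mul_inv_cancel₀ ha, mul_inv_cancel₀ hb, spectralComb_one_one]

def legLAlgHom : Matrix (Fin 2 × Fin 2) (Fin 2 × Fin 2) KK →ₐ[KK]
    Matrix (Fin 2 × Fin 2 × Fin 2) (Fin 2 × Fin 2 × Fin 2) KK where
  toFun := legL
  map_one' := by
    ext p q; simp [legL, one_apply, Prod.ext_iff]
    split_ifs <;> simp_all
  map_mul' A B := by
    ext p q; simp [legL, mul_apply, Fintype.sum_prod_type]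
  map_zero' := by ext; simp [legL]
  map_add' A B := by ext; simp only [legL, of_apply, Matrix.add_apply, add_mul]
  commutes' r := by
    ext; simp [legL, algebraMap_eq_diagonal, diagonal_apply, Prod.ext_iff]
    split_ifs <;> simp_all

def legRAlgHom : Matrix (Fin 2 × Fin 2) (Fin 2 × Fin 2) KK →ₐ[KK]
    Matrix (Fin 2 × Fin 2 × Fin 2) (Fin 2 × Fin 2 × Fin 2) KK where
  toFun := legR
  map_one' := by
    ext p q; simp [legR, one_apply, Prod.ext_iff]
    split_ifs <;> simp_all
  map_mul' A B := by
    ext p q; simp [legR, mul_apply, Fintype.sum_prod_type]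
  map_zero' := by ext; simp [legR]
  map_add' A B := by ext; simp only [legR, of_apply, Matrix.add_apply, mul_add]
  commutes' r := by
    ext; simp [legR, algebraMap_eq_diagonal, diagonal_apply, Prod.ext_iff]
    split_ifs <;> simp_all

theorem MvPolynomial.algebraMap_ne_zero_of_constantCoeff_ne_zero {σ R K : Type*} [CommRing R]
    [CommRing K] [Algebra (MvPolynomial σ R) K] [IsFractionRing (MvPolynomial σ R) K]
    {p : MvPolynomial σ R} (hp : constantCoeff p ≠ 0) :
    algebraMap (MvPolynomial σ R) K p ≠ 0 :=
  IsFractionRing.to_map_eq_zero_iff.not.mpr (ne_of_apply_ne constantCoeff (by rwa [map_zero]))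

theorem one_add_three_mul_xi_ne_zero (i : Fin 3) : 1 + 3 * xi i ≠ 0 := by
  convert MvPolynomial.algebraMap_ne_zero_of_constantCoeff_ne_zero (K := KK)
    (p := (1 + 3 * .X i : MvPolynomial (Fin 3) ℚ)) (by simp)
  simp [xi, map_ofNat]

theorem one_sub_xi_ne_zero (i : Fin 3) : 1 - xi i ≠ 0 := by
  convert MvPolynomial.algebraMap_ne_zero_of_constantCoeff_ne_zero (K := KK)
    (p := (1 - .X i : MvPolynomial (Fin 3) ℚ)) (by simp)
  simp [xi]

def onesProj : Matrix (Fin 2 × Fin 2) (Fin 2 × Fin 2) KK := (4 : KK)⁻¹ • of 1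

theorem isIdempotentElem_onesProj : IsIdempotentElem onesProj := by
  simpa [onesProj] using isIdempotentElem_inv_card_smul_of_one (n := Fin 2 × Fin 2) (α := KK)
    (by norm_num)

theorem bmat_eq_spectralComb : bmat = spectralComb onesProj (-3 : KK) 1 := by
  have hb : bmat = of 1 - (3 : KK) • 1 := by
    ext ⟨a, b⟩ ⟨c, d⟩
    fin_cases a <;> fin_cases b <;> fin_cases c <;> fin_cases d <;>
      simp [bmat, toPairs, finProdFinEquiv, one_apply] <;> norm_num
  rw [hb, spectralComb_eq_smul_one_add, onesProj, smul_smul]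
  norm_num
  abel

theorem R_eq_spectralComb (β α : Fin 3) :
    R β α = spectralComb onesProj (-((1 + 3 * xi β) / (1 + 3 * xi α)))
      (-((1 - xi β) / (1 - xi α))) := by
  have hu : 1 - xi α * -3 ≠ 0 := by
    convert one_add_three_mul_xi_ne_zero α using 1
    ring
  have hv : 1 - xi α * 1 ≠ 0 := by simpa using one_sub_xi_ne_zero α
  rw [R, bmat_eq_spectralComb, one_sub_smul_spectralComb, one_sub_smul_spectralComb,
    inv_spectralComb isIdempotentElem_onesProj hu hv, isIdempotentElem_onesProj.spectralComb_mul,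
    neg_spectralComb]
  congr 2 <;> ring

theorem legL_spectralComb (P : Matrix (Fin 2 × Fin 2) (Fin 2 × Fin 2) KK) (a b : KK) :
    legL (spectralComb P a b) = spectralComb (legL P) a b :=
  map_spectralComb legLAlgHom P a b

theorem legR_spectralComb (P : Matrix (Fin 2 × Fin 2) (Fin 2 × Fin 2) KK) (a b : KK) :
    legR (spectralComb P a b) = spectralComb (legR P) a b :=
  map_spectralComb legRAlgHom P a b

theorem commute_legL_legR_onesProj : Commute (legL onesProj) (legR onesProj) := by
  have hLR : legL (of 1) * legR (of 1) = (2 : KK) • of 1 := by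
    ext ⟨a, b, c⟩ ⟨d, e, f⟩
    simp only [legL, legR, mul_apply, of_apply, Fintype.sum_prod_type, Fin.sum_univ_two,
      Pi.one_apply, Matrix.smul_apply, smul_eq_mul]
    fin_cases c <;> fin_cases d <;> simp <;> norm_num
  have hRL : legR (of 1) * legL (of 1) = (2 : KK) • of 1 := by
    ext ⟨a, b, c⟩ ⟨d, e, f⟩
    simp only [legL, legR, mul_apply, of_apply, Fintype.sum_prod_type, Fin.sum_univ_two,
      Pi.one_apply, Matrix.smul_apply, smul_eq_mul]
    fin_cases a <;> fin_cases f <;> simp <;> norm_num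
  have hcomm : Commute (legL (of 1)) (legR (of 1)) := hLR.trans hRL.symm
  change Commute (legLAlgHom onesProj) (legRAlgHom onesProj)
  rw [onesProj, map_smul, map_smul]
  exact (hcomm.smul_left _).smul_right _

/-- The Yang–Baxter equation for this interaction matrix:
`(R_{γβ} ⊗ I)(I ⊗ R_{γα})(R_{βα} ⊗ I) = (I ⊗ R_{βα})(R_{γα} ⊗ I)(I ⊗ R_{γβ})`
with `α = 0`, `β = 1`, `γ = 2`. -/
theorem yang_baxter_b28 :
    legL (R 2 1) * legR (R 2 0) * legL (R 1 0) =
      legR (R 1 0) * legL (R 2 0) * legR (R 2 1) := by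
  simp only [R_eq_spectralComb, legL_spectralComb, legR_spectralComb]
  refine spectralComb_yangBaxter (isIdempotentElem_onesProj.map legLAlgHom)
    (isIdempotentElem_onesProj.map legRAlgHom) commute_legL_legR_onesProj ?_
  have := one_add_three_mul_xi_ne_zero 0
  have := one_add_three_mul_xi_ne_zero 1
  have := one_sub_xi_ne_zero 0
  have := one_sub_xi_ne_zero 1
  field_simp

end
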